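/- In the group algebra ℂ[S_k], the product L_2 L_3 ⋯ L_k of the Jucys–Murphy elements equals the sum of all k-cycles in S_k (i.e. the sum of all permutations in S_k consisting of a single cycle of length k). -/

import Mathlib

/-!
Let `C_s` be the sum of the permutations that are a single cycle through all points of `s` and fix
everything else. For `a ∉ s` and `m ∈ s`, right multiplication by the transposition `(m a)` inserts
`a` into a cycle on `s` just before `σ m` (the product sends `m ↦ a ↦ σ m`), and every cycle `τ`
on `s ∪ {a}` arises exactly once this way, from `m = τ⁻¹ a`. Hence
`C_s · Σ_{m ∈ s} (m a) = C_{s ∪ {a}}`, and since `C_{{1}} = 1`, induction gives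
`L₂ ⋯ L_j = C_{{1, …, j}}`.
-/

open MonoidAlgebra

/-- The `j`-th Jucys–Murphy element of `ℂ[S_k]` (0-indexed: `JM k j` corresponds to the
classical `L_{j+1} = Σ_{m < j+1} (m, j+1)`, so `JM k 0 = L₁ = 0`). -/
noncomputable def JM (k : ℕ) (j : Fin k) : MonoidAlgebra ℂ (Equiv.Perm (Fin k)) :=
  ∑ m ∈ Finset.univ.filter (fun m : Fin k => m < j),
    MonoidAlgebra.of ℂ (Equiv.Perm (Fin k)) (Equiv.swap m j)

namespace Equiv.Perm

variable {α : Type*} {σ τ : Perm α} {s : Set α} {a m : α}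

/-- Unlike `Equiv.Perm.IsCycleOn`, this pins `σ` down outside `s`; in particular it forces
`σ = 1` when `s` is a subsingleton. -/
def IsFullCycleOn (σ : Perm α) (s : Set α) : Prop :=
  (∀ x ∉ s, σ x = x) ∧ ∀ x ∈ s, ∀ y ∈ s, σ.SameCycle x y

theorem isFullCycleOn_univ_iff : σ.IsFullCycleOn .univ ↔ ∀ x y, σ.SameCycle x y := by
  simp [IsFullCycleOn]

theorem isFullCycleOn_iff_eq_one_of_subsingleton (hs : s.Subsingleton) :
    σ.IsFullCycleOn s ↔ σ = 1 := by
  refine ⟨fun hσ => ext fun x => ?_, ?_⟩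
  · by_contra hx
    have hxs : x ∈ s := by_contra fun h => hx (hσ.1 x h)
    have hσxs : σ x ∈ s := by_contra fun h => hx (σ.injective (hσ.1 (σ x) h))
    exact hx (hs hσxs hxs)
  · rintro rfl
    exact ⟨fun _ _ => rfl, fun x hx y hy => (hs hx hy).sameCycle 1⟩

theorem IsFullCycleOn.inv_apply_mem (hτ : τ.IsFullCycleOn (insert a s)) (ha : a ∉ s)
    (hs : s.Nonempty) : τ⁻¹ a ∈ s := by
  obtain ⟨b, hb⟩ := hs
  have hτa : τ a ≠ a := fun h =>
    ha ((hτ.2 a (s.mem_insert a) b (Set.mem_insert_of_mem _ hb)).eq_of_left h ▸ hb)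
  have hτm : τ (τ⁻¹ a) = a := τ.apply_symm_apply a
  by_contra hm
  have hma : τ⁻¹ a ≠ a := fun h => hτa (by rwa [h] at hτm)
  have hfix := hτ.1 (τ⁻¹ a) (by rw [Set.mem_insert_iff, not_or]; exact ⟨hma, hm⟩)
  exact hma (hτm.symm.trans hfix).symm

variable [DecidableEq α]

theorem mul_swap_apply_of_ne_of_ne {x : α} (hxm : x ≠ m) (hxa : x ≠ a) :
    (σ * swap m a) x = σ x := by
  rw [mul_apply, swap_apply_of_ne_of_ne hxm hxa]

theorem IsFullCycleOn.mul_swap [Finite α] (hσ : σ.IsFullCycleOn s) (ha : a ∉ s) (hm : m ∈ s) :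
    (σ * swap m a).IsFullCycleOn (insert a s) := by
  have hσa : σ a = a := hσ.1 a ha
  have hma : m ≠ a := ne_of_mem_of_not_mem hm ha
  refine ⟨fun x hx => ?_, ?_⟩
  · rw [Set.mem_insert_iff, not_or] at hx
    rw [mul_swap_apply_of_ne_of_ne (ne_of_mem_of_not_mem hm hx.2).symm hx.1, hσ.1 x hx.2]
  -- `σ * swap m a` runs through `a, σ m, σ² m, …, m` and back to `a`
  have orbit : ∀ n : ℕ, (σ * swap m a).SameCycle a ((σ ^ n) m) := by
    intro n
    induction n with
    | zero =>
      have hm_to_a : (σ * swap m a) m = a := by rw [mul_apply, swap_apply_left, hσa]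
      have h : (σ * swap m a).SameCycle m a := sameCycle_apply_left.mp (by rw [hm_to_a])
      rw [pow_zero, one_apply]
      exact h.symm
    | succ n ih =>
      have hna : (σ ^ n) m ≠ a := fun h =>
        hma ((σ ^ n).injective (h.trans (pow_apply_eq_self_of_apply_eq_self hσa n).symm))
      rw [pow_succ', mul_apply]
      by_cases hnm : (σ ^ n) m = m
      · have : (σ * swap m a) a = σ m := by rw [mul_apply, swap_apply_right]
        rw [hnm, ← this]
        exact sameCycle_apply_right.mpr SameCycle.rfl
      · rw [← mul_swap_apply_of_ne_of_ne hnm hna]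
        exact sameCycle_apply_right.mpr ih
  have hmem : ∀ y ∈ insert a s, (σ * swap m a).SameCycle a y := by
    rintro y (rfl | hy)
    · rfl
    · obtain ⟨n, rfl⟩ := (hσ.2 m hm y hy).exists_nat_pow_eq
      exact orbit n
  exact fun x hx y hy => (hmem x hx).symm.trans (hmem y hy)

theorem IsFullCycleOn.mul_swap_inv_apply [Finite α] (hτ : τ.IsFullCycleOn (insert a s))
    (ha : a ∉ s) (hs : s.Nonempty) : (τ * swap (τ⁻¹ a) a).IsFullCycleOn s := by
  set m := τ⁻¹ a
  have hm : m ∈ s := hτ.inv_apply_mem ha hs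
  have hτm : τ m = a := τ.apply_symm_apply a
  refine ⟨fun x hx => ?_, ?_⟩
  · by_cases hxa : x = a
    · rw [hxa, mul_apply, swap_apply_right, hτm]
    · rw [mul_swap_apply_of_ne_of_ne (ne_of_mem_of_not_mem hm hx).symm hxa]
      exact hτ.1 x (by simp [hxa, hx])
  -- `τ * swap m a` runs through `m, τ a, τ² a, …` and closes up where `τ` reaches `m`
  have orbit : ∀ n : ℕ, (τ ^ n) a = a ∨ (τ * swap m a).SameCycle m ((τ ^ n) a) := by
    intro n
    induction n with
    | zero => exact Or.inl rfl
    | succ n ih =>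
      rw [pow_succ', mul_apply]
      by_cases hna : (τ ^ n) a = a
      · have : (τ * swap m a) m = τ a := by rw [mul_apply, swap_apply_left]
        rw [hna, ← this]
        exact Or.inr (sameCycle_apply_right.mpr SameCycle.rfl)
      by_cases hnm : (τ ^ n) a = m
      · exact Or.inl (hnm ▸ hτm)
      · rw [← mul_swap_apply_of_ne_of_ne hnm hna]
        exact Or.inr (sameCycle_apply_right.mpr (ih.resolve_left hna))
  have hmem : ∀ y ∈ s, (τ * swap m a).SameCycle m y := by
    intro y hy
    obtain ⟨n, rfl⟩ :=
      (hτ.2 a (s.mem_insert a) y (Set.mem_insert_of_mem _ hy)).exists_nat_pow_eq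
    exact (orbit n).resolve_left (ne_of_mem_of_not_mem hy ha)
  exact fun x hx y hy => (hmem x hx).symm.trans (hmem y hy)

variable [Fintype α] (R : Type*) [Semiring R]

open scoped Classical in
noncomputable def cycleSum (s : Set α) : MonoidAlgebra R (Perm α) :=
  ∑ σ ∈ Finset.univ.filter (·.IsFullCycleOn s), of R (Perm α) σ

theorem cycleSum_mul_sum_swap {s : Finset α} (ha : a ∉ s) (hs : s.Nonempty) :
    cycleSum R s * ∑ m ∈ s, of R (Perm α) (swap m a) = cycleSum R (insert a s) := by
  classical
  simp only [cycleSum, Finset.sum_mul_sum, ← map_mul, ← Finset.sum_product']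
  refine Finset.sum_nbij' (fun p => p.1 * swap p.2 a) (fun τ => (τ * swap (τ⁻¹ a) a, τ⁻¹ a))
    ?_ ?_ ?_ ?_ fun _ _ => rfl
  · rintro ⟨σ, m⟩ hp
    simp only [Finset.mem_product, Finset.mem_filter, Finset.mem_univ, true_and] at hp ⊢
    exact hp.1.mul_swap ha hp.2
  · intro τ hτ
    simp only [Finset.mem_product, Finset.mem_filter, Finset.mem_univ, true_and] at hτ ⊢
    exact ⟨hτ.mul_swap_inv_apply ha hs, hτ.inv_apply_mem ha hs⟩
  · rintro ⟨σ, m⟩ hp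
    simp only [Finset.mem_product, Finset.mem_filter, Finset.mem_univ, true_and] at hp
    have hσa : σ⁻¹ a = a := inv_eq_iff_eq.mpr (hp.1.1 a ha).symm
    have hm : (σ * swap m a)⁻¹ a = m := by
      rw [mul_inv_rev, swap_inv, mul_apply, hσa, swap_apply_right]
    simp only [hm, mul_swap_mul_self]
  · intro τ _
    simp only [mul_swap_mul_self]

theorem cycleSum_univ [DecidablePred fun σ : Perm α => ∀ x y, σ.SameCycle x y] :
    cycleSum R .univ = ∑ σ : Perm α, if ∀ x y, σ.SameCycle x y then of R (Perm α) σ else 0 := by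
  simp only [cycleSum, Finset.sum_filter, isFullCycleOn_univ_iff]

theorem cycleSum_of_subsingleton {s : Set α} (hs : s.Subsingleton) : cycleSum R s = 1 := by
  simp only [cycleSum, isFullCycleOn_iff_eq_one_of_subsingleton hs, Finset.filter_eq',
    Finset.mem_univ, if_true, Finset.sum_singleton, map_one]

end Equiv.Perm

open Equiv.Perm

theorem prod_JM_eq_cycleSum (k j : ℕ) (hj : j < k) :
    (List.ofFn fun i : Fin j => JM k ⟨i + 1, by omega⟩).prod =
      cycleSum ℂ {x : Fin k | (x : ℕ) ≤ j} := by
  induction j with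
  | zero =>
    rw [List.ofFn_zero, List.prod_nil, cycleSum_of_subsingleton]
    intro x hx y hy
    exact Fin.ext ((Nat.le_zero.mp hx).trans (Nat.le_zero.mp hy).symm)
  | succ j ih =>
    set a : Fin k := ⟨j + 1, hj⟩
    have hs : ((Finset.univ.filter (· < a) : Finset (Fin k)) : Set (Fin k)) =
        {x : Fin k | (x : ℕ) ≤ j} := by
      ext x
      simp [a, Fin.lt_def]
    have hins : insert a {x : Fin k | (x : ℕ) ≤ j} = {x : Fin k | (x : ℕ) ≤ j + 1} := by
      ext x
      simp only [Set.mem_insert_iff, Fin.ext_iff, Set.mem_ofPred_eq, a]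
      omega
    rw [List.ofFn_succ', List.prod_concat]
    simp only [Fin.val_castSucc, Fin.val_last]
    rw [ih (by omega), JM, ← hs, cycleSum_mul_sum_swap, hs, hins]
    · simp [a]
    · exact ⟨⟨0, by omega⟩, by simp [a, Fin.lt_def]⟩

open scoped Classical in
/-- In `ℂ[S_k]`, the (ordered) product `L₂ L₃ ⋯ L_k` of the Jucys–Murphy elements equals
the sum of all `k`-cycles of `S_k`, i.e. of all permutations of `Fin k` consisting of a
single cycle through all `k` points. -/
theorem prod_jucys_murphy_eq_sum_cycles (k : ℕ) :
    (List.ofFn (fun j : Fin (k - 1) =>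
        JM k ⟨(j : ℕ) + 1, by omega⟩)).prod =
      ∑ σ : Equiv.Perm (Fin k),
        if (∀ x y : Fin k, σ.SameCycle x y) then
          MonoidAlgebra.of ℂ (Equiv.Perm (Fin k)) σ
        else 0 := by
  rw [← cycleSum_univ]
  rcases k with _ | j
  · rw [List.ofFn_zero, List.prod_nil, cycleSum_of_subsingleton _ Set.subsingleton_of_subsingleton]
  · refine (prod_JM_eq_cycleSum (j + 1) j j.lt_add_one).trans (congrArg _ ?_)
    ext x
    simpa using Nat.le_of_lt_succ x.isLt
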